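/- The power series Σ_{n=1}^∞ c_n s^n with real coefficients c_n = Γ(3n/2 − 1)/(Γ(n/2) · n! · 3^{n−1}) has radius of convergence exactly 2/√3; equivalently, lim_{n→∞} (c_n)^{1/n} = √3/2. -/

import Mathlib

/-!
By `Γ(x + 1) = x Γ(x)`, the ratio `c (n + 2) / c n` is the rational function
`(9n² - 4) / (12 (n + 1) (n + 2))`, which tends to `3/4`. Taking logarithms, Cesàro averaging
along each residue class mod 2 turns this into `c n ^ (1/n) → (3/4)^(1/2) = √3/2`, and the root
test then gives radius of convergence `2/√3`.
-/

open Filter Topology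

/-- The coefficients `c_n = Γ(3n/2 − 1)/(Γ(n/2)·n!·3^{n−1})`. -/
noncomputable def cCoef (n : ℕ) : ℝ :=
  Real.Gamma (3 * n / 2 - 1) / (Real.Gamma (n / 2) * n.factorial * 3 ^ (n - 1))

theorem tendsto_div_natCast_of_tendsto_sub {b : ℕ → ℝ} {ℓ : ℝ}
    (h : Tendsto (fun n => b (n + 1) - b n) atTop (𝓝 ℓ)) :
    Tendsto (fun n => b n / n) atTop (𝓝 ℓ) := by
  have hsum : Tendsto (fun n : ℕ => (n : ℝ)⁻¹ * (b n - b 0) + b 0 / n) atTop (𝓝 (ℓ + 0)) := by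
    refine .add ?_ (tendsto_const_div_atTop_nhds_zero_nat (b 0))
    simpa only [Finset.sum_range_sub] using h.cesaro
  rw [add_zero] at hsum
  refine hsum.congr fun n => ?_
  ring

theorem tendsto_of_tendsto_comp_mul_add {α : Type*} {u : ℕ → α} {l : Filter α} {k : ℕ}
    (hk : 0 < k) (h : ∀ r < k, Tendsto (fun m => u (k * m + r)) atTop l) :
    Tendsto u atTop l := by
  intro s hs
  have hall : ∀ᶠ m in atTop, ∀ r ∈ Finset.range k, u (k * m + r) ∈ s :=
    (Finset.eventually_all _).2 fun r hr => h r (Finset.mem_range.1 hr) hs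
  obtain ⟨N, hN⟩ := eventually_atTop.1 hall
  refine mem_map.2 (mem_atTop_sets.2 ⟨k * N, fun n hn => ?_⟩)
  have hNle : N ≤ n / k := (Nat.le_div_iff_mul_le hk).2 (by linarith [mul_comm k N])
  have := hN (n / k) hNle (n % k) (Finset.mem_range.2 (Nat.mod_lt n hk))
  rwa [Nat.div_add_mod] at this

theorem tendsto_div_natCast_of_tendsto_sub_add {b : ℕ → ℝ} {ℓ : ℝ} {k : ℕ} (hk : 0 < k)
    (h : Tendsto (fun n => b (n + k) - b n) atTop (𝓝 ℓ)) :
    Tendsto (fun n => b n / n) atTop (𝓝 (ℓ / k)) := by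
  refine tendsto_of_tendsto_comp_mul_add hk fun r _ => ?_
  have hlin : Tendsto (fun m : ℕ => k * m + r) atTop atTop :=
    tendsto_atTop_mono (fun m => le_add_right (Nat.le_mul_of_pos_left m hk)) tendsto_id
  have hstep : Tendsto (fun m : ℕ => b (k * m + r) / m) atTop (𝓝 ℓ) :=
    tendsto_div_natCast_of_tendsto_sub <| (h.comp hlin).congr fun m => by
      rw [Function.comp_apply, show k * (m + 1) + r = k * m + r + k by ring]
  have hk' : (k : ℝ) ≠ 0 := by positivity
  have hscale : Tendsto (fun m : ℕ => (k + r / m : ℝ)⁻¹) atTop (𝓝 (k : ℝ)⁻¹) := by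
    simpa using (tendsto_const_nhds.add (tendsto_const_div_atTop_nhds_zero_nat (r : ℝ))).inv₀
      (by simpa using hk')
  refine (hstep.mul hscale).congr' ?_
  filter_upwards [eventually_ne_atTop 0] with m hm
  have hm' : (m : ℝ) ≠ 0 := by exact_mod_cast hm
  push_cast
  field_simp

theorem tendsto_rpow_inv_natCast_of_tendsto_div {a : ℕ → ℝ} {L : ℝ} {k : ℕ} (hk : 0 < k)
    (hL : 0 < L) (ha : ∀ᶠ n in atTop, 0 < a n)
    (h : Tendsto (fun n => a (n + k) / a n) atTop (𝓝 L)) :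
    Tendsto (fun n : ℕ => a n ^ (n : ℝ)⁻¹) atTop (𝓝 (L ^ (k : ℝ)⁻¹)) := by
  have hlog : Tendsto (fun n => Real.log (a (n + k)) - Real.log (a n)) atTop (𝓝 (Real.log L)) := by
    refine ((Real.continuousAt_log hL.ne').tendsto.comp h).congr' ?_
    filter_upwards [ha, (tendsto_add_atTop_nat k).eventually ha] with n hn hnk
    exact Real.log_div hnk.ne' hn.ne'
  have hexp := (Real.continuous_exp.tendsto _).comp
    (tendsto_div_natCast_of_tendsto_sub_add (b := fun n => Real.log (a n)) hk hlog)
  rw [Real.rpow_def_of_pos hL, ← div_eq_mul_inv]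
  refine hexp.congr' ?_
  filter_upwards [ha] with n hn
  rw [Real.rpow_def_of_pos hn, Function.comp_apply, div_eq_mul_inv]

theorem summable_of_tendsto_norm_rpow_inv_natCast {E : Type*} [NormedAddCommGroup E]
    [CompleteSpace E] {f : ℕ → E} {L : ℝ}
    (h : Tendsto (fun n : ℕ => ‖f n‖ ^ (n : ℝ)⁻¹) atTop (𝓝 L)) (hL : L < 1) :
    Summable f := by
  obtain ⟨q, hLq, hq1⟩ := exists_between hL
  have hq0 : 0 ≤ q := (ge_of_tendsto' h fun n => by positivity).trans hLq.le
  refine .of_norm_bounded_eventually_nat (summable_geometric_of_lt_one hq0 hq1) ?_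
  filter_upwards [h.eventually_lt_const hLq, eventually_ne_atTop 0] with n hn hn0
  calc ‖f n‖ = (‖f n‖ ^ (n : ℝ)⁻¹) ^ n := (Real.rpow_inv_natCast_pow (norm_nonneg _) hn0).symm
    _ ≤ q ^ n := pow_le_pow_left₀ (by positivity) hn.le n

theorem not_summable_of_tendsto_norm_rpow_inv_natCast {E : Type*} [NormedAddCommGroup E]
    {f : ℕ → E} {L : ℝ}
    (h : Tendsto (fun n : ℕ => ‖f n‖ ^ (n : ℝ)⁻¹) atTop (𝓝 L)) (hL : 1 < L) :
    ¬ Summable f := by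
  intro hf
  have hsmall := (tendsto_zero_iff_norm_tendsto_zero.1 hf.tendsto_atTop_zero).eventually_lt_const
    one_pos
  obtain ⟨n, hn, hn0, hsmall⟩ :=
    ((h.eventually_const_lt hL).and ((eventually_ne_atTop 0).and hsmall)).exists
  have : 1 ≤ ‖f n‖ := by
    calc (1 : ℝ) = 1 ^ n := (one_pow n).symm
      _ ≤ (‖f n‖ ^ (n : ℝ)⁻¹) ^ n := pow_le_pow_left₀ zero_le_one hn.le n
      _ = ‖f n‖ := Real.rpow_inv_natCast_pow (norm_nonneg _) hn0
  linarith

theorem cCoef_pos {n : ℕ} (hn : n ≠ 0) : 0 < cCoef n := by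
  have : (1 : ℝ) ≤ n := by exact_mod_cast Nat.one_le_iff_ne_zero.2 hn
  have hx : (0 : ℝ) < 3 * n / 2 - 1 := by linarith
  unfold cCoef
  have := Real.Gamma_pos_of_pos hx
  have := Real.Gamma_pos_of_pos (by positivity : (0 : ℝ) < n / 2)
  positivity

theorem cCoef_add_two_div {n : ℕ} (hn : n ≠ 0) :
    cCoef (n + 2) / cCoef n = (9 * n ^ 2 - 4) / (12 * (n + 1) * (n + 2)) := by
  have hn1 : (1 : ℝ) ≤ n := by exact_mod_cast Nat.one_le_iff_ne_zero.2 hn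
  set x : ℝ := 3 * n / 2 - 1 with hx
  have hx0 : 0 < x := by linarith
  have hΓx : Real.Gamma (3 * ↑(n + 2) / 2 - 1) = (x + 2) * (x + 1) * x * Real.Gamma x := by
    rw [show 3 * ((n + 2 : ℕ) : ℝ) / 2 - 1 = x + 1 + 1 + 1 by push_cast; ring,
      Real.Gamma_add_one (by positivity), Real.Gamma_add_one (by positivity),
      Real.Gamma_add_one hx0.ne']
    ring
  have hΓn : Real.Gamma (↑(n + 2) / 2) = n / 2 * Real.Gamma (n / 2) := by
    rw [show ((n + 2 : ℕ) : ℝ) / 2 = n / 2 + 1 by push_cast; ring,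
      Real.Gamma_add_one (by positivity)]
  have hfac : ((n + 2).factorial : ℝ) = (n + 2) * (n + 1) * n.factorial := by
    push_cast [Nat.factorial_succ]; ring
  have hpow : (3 : ℝ) ^ (n + 2 - 1) = 9 * 3 ^ (n - 1) := by
    rw [show n + 2 - 1 = n - 1 + 2 by omega, pow_add]; ring
  have := Real.Gamma_pos_of_pos hx0
  have := Real.Gamma_pos_of_pos (by positivity : (0 : ℝ) < n / 2)
  unfold cCoef
  rw [hΓx, hΓn, hfac, hpow, ← hx]
  field_simp
  ring

theorem tendsto_cCoef_add_two_div :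
    Tendsto (fun n => cCoef (n + 2) / cCoef n) atTop (𝓝 (3 / 4)) := by
  have hcont : ContinuousAt (fun t : ℝ => (9 - 4 * t ^ 2) / (12 * (1 + t) * (1 + 2 * t))) 0 :=
    ContinuousAt.div (by fun_prop) (by fun_prop) (by norm_num)
  have hlim : Tendsto (fun n : ℕ => (9 - 4 * (n : ℝ)⁻¹ ^ 2) /
      (12 * (1 + (n : ℝ)⁻¹) * (1 + 2 * (n : ℝ)⁻¹))) atTop (𝓝 (3 / 4)) := by
    convert hcont.tendsto.comp tendsto_inv_atTop_nhds_zero_nat using 2 <;> norm_num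
  refine hlim.congr' ?_
  filter_upwards [eventually_ne_atTop 0] with n hn
  have hn' : (n : ℝ) ≠ 0 := by exact_mod_cast hn
  rw [cCoef_add_two_div hn]
  field_simp

theorem tendsto_cCoef_rpow_inv :
    Tendsto (fun n : ℕ => cCoef n ^ (n : ℝ)⁻¹) atTop (𝓝 (Real.sqrt 3 / 2)) := by
  have hroot : ((3 : ℝ) / 4) ^ ((2 : ℕ) : ℝ)⁻¹ = Real.sqrt 3 / 2 := by
    rw [Nat.cast_ofNat, ← one_div, ← Real.sqrt_eq_rpow,
      Real.sqrt_div' _ (by norm_num : (0 : ℝ) ≤ 4), show (4 : ℝ) = 2 ^ 2 by norm_num,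
      Real.sqrt_sq zero_le_two]
  simpa only [hroot] using tendsto_rpow_inv_natCast_of_tendsto_div two_pos (by norm_num)
    ((eventually_ne_atTop 0).mono fun n => cCoef_pos) tendsto_cCoef_add_two_div

theorem tendsto_norm_cCoef_mul_pow_rpow_inv (s : ℝ) :
    Tendsto (fun n : ℕ => ‖cCoef n * s ^ n‖ ^ (n : ℝ)⁻¹) atTop
      (𝓝 (Real.sqrt 3 / 2 * |s|)) := by
  refine (tendsto_cCoef_rpow_inv.mul_const |s|).congr' ?_
  filter_upwards [eventually_ne_atTop 0] with n hn
  rw [norm_mul, norm_pow, Real.norm_eq_abs, Real.norm_eq_abs, abs_of_pos (cCoef_pos hn),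
    Real.mul_rpow (cCoef_pos hn).le (by positivity),
    Real.pow_rpow_inv_natCast (abs_nonneg s) hn]

theorem stmt1 :
    (∀ s : ℝ, |s| < 2 / Real.sqrt 3 →
      Summable fun n : ℕ => cCoef (n + 1) * s ^ (n + 1)) ∧
    (∀ s : ℝ, 2 / Real.sqrt 3 < |s| →
      ¬ Summable fun n : ℕ => cCoef (n + 1) * s ^ (n + 1)) ∧
    Tendsto (fun n : ℕ => cCoef n ^ ((n : ℝ)⁻¹)) atTop (nhds (Real.sqrt 3 / 2)) := by
  have hsqrt3 : 0 < Real.sqrt 3 / 2 := by positivity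
  refine ⟨fun s hs => ?_, fun s hs => ?_, tendsto_cCoef_rpow_inv⟩
  · refine (summable_nat_add_iff 1).2
      (summable_of_tendsto_norm_rpow_inv_natCast (tendsto_norm_cCoef_mul_pow_rpow_inv s) ?_)
    rwa [← lt_div_iff₀' hsqrt3, one_div_div]
  · refine (summable_nat_add_iff 1).not.2
      (not_summable_of_tendsto_norm_rpow_inv_natCast (tendsto_norm_cCoef_mul_pow_rpow_inv s) ?_)
    rwa [← div_lt_iff₀' hsqrt3, one_div_div]
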